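/- Unique eigenvalue of maximum modulus for the modified Perron matrix: Let N : ℕ with N ≥ 1, let G be a connected simple graph on Fin N, let w : Fin N → ℝ with w i > 0 for all i, let ε > 0 satisfy ε * (∑ over j adjacent to i of w j) < 1 for every node i, and let Ŵ be the modified Perron matrix. Then 1 is an eigenvalue of Ŵ, and every eigenvalue μ ∈ ℂ of the complexification of Ŵ with μ ≠ 1 satisfies ‖μ‖ < 1; i.e., Ŵ has exactly one eigenvalue of maximum modulus 1. -/

import Mathlib

/-!
Every row of `Ŵ` sums to `1`, has positive diagonal entry `aᵢ` and nonnegative off-diagonal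
entries, so the constant vector is an eigenvector for `1`, and by Gershgorin every eigenvalue lies
in some disc of centre `aᵢ ∈ (0, 1]` and radius `1 - aᵢ`. These discs lie inside the closed unit
disc and meet the unit circle only at `1`.
-/

open Finset

/-- The modified Perron matrix `Ŵ = I − ε (T ⊗ L)` of the robust weighted average consensus
algorithm. -/
def modifiedPerron (N : ℕ) (G : SimpleGraph (Fin N)) [DecidableRel G.Adj]
    (w : Fin N → ℝ) (ε : ℝ) : Matrix (Fin N) (Fin N) ℝ :=
  fun i j =>
    if i = j then 1 - ε * ∑ k ∈ G.neighborFinset i, w k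
    else if G.Adj i j then ε * w j else 0

theorem Complex.norm_lt_one_of_mem_closedBall {a : ℝ} (ha : 0 < a) {μ : ℂ}
    (hμ : μ ∈ Metric.closedBall (a : ℂ) (1 - a)) (hμ1 : μ ≠ 1) : ‖μ‖ < 1 := by
  rw [mem_closedBall_iff_norm] at hμ
  have hsq : (μ.re - a) ^ 2 + μ.im ^ 2 ≤ (1 - a) ^ 2 := by
    have hnorm : ‖μ - a‖ ^ 2 = (μ.re - a) ^ 2 + μ.im ^ 2 := by
      rw [Complex.sq_norm, Complex.normSq_apply]
      simp only [Complex.sub_re, Complex.sub_im, Complex.ofReal_re, Complex.ofReal_im]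
      ring
    rw [← hnorm]
    exact pow_le_pow_left₀ (norm_nonneg _) hμ 2
  have hnorm_sq : ‖μ‖ ^ 2 = μ.re ^ 2 + μ.im ^ 2 := by
    rw [Complex.sq_norm, Complex.normSq_apply]; ring
  have ha1 : a ≤ 1 := by linarith [norm_nonneg (μ - a)]
  rcases lt_or_ge μ.re 1 with hre | hre
  · nlinarith [norm_nonneg μ]
  · -- with `a ≤ 1` this forces `(μ.re - 1) ^ 2 + μ.im ^ 2 ≤ 0`
    have hre1 : μ.re = 1 := by nlinarith
    have him : μ.im = 0 := by nlinarith
    exact absurd (Complex.ext (by simpa using hre1) (by simpa using him)) hμ1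

namespace Matrix

variable {n : Type*} [Fintype n] [DecidableEq n]

theorem one_mem_spectrum_of_sum_row_eq_one {K : Type*} [Field K] [Nonempty n]
    {A : Matrix n n K} (hrow : ∀ i, ∑ j, A i j = 1) : (1 : K) ∈ spectrum K A := by
  rw [← spectrum_toLin', ← Module.End.hasEigenvalue_iff_mem_spectrum]
  refine Module.End.hasEigenvalue_of_hasEigenvector (x := 1) ⟨?_, one_ne_zero⟩
  rw [Module.End.mem_eigenspace_iff, toLin'_apply, one_smul]
  ext i
  simp [mulVec, dotProduct, hrow]

theorem norm_lt_one_of_mem_spectrum_map_ofReal {A : Matrix n n ℝ} (hdiag : ∀ i, 0 < A i i)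
    (hoff : ∀ i j, i ≠ j → 0 ≤ A i j) (hrow : ∀ i, ∑ j, A i j = 1) {μ : ℂ}
    (hμ : μ ∈ spectrum ℂ (A.map Complex.ofReal)) (hμ1 : μ ≠ 1) : ‖μ‖ < 1 := by
  rw [← spectrum_toLin', ← Module.End.hasEigenvalue_iff_mem_spectrum] at hμ
  obtain ⟨k, hk⟩ := eigenvalue_mem_ball hμ
  have hradius : ∑ j ∈ univ.erase k, ‖(A.map Complex.ofReal) k j‖ = 1 - A k k := by
    rw [← hrow k, ← add_sum_erase _ _ (mem_univ k), add_sub_cancel_left]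
    refine sum_congr rfl fun j hj => ?_
    rw [map_apply, Complex.norm_real, Real.norm_of_nonneg (hoff k j (ne_of_mem_erase hj).symm)]
  rw [hradius] at hk
  exact Complex.norm_lt_one_of_mem_closedBall (hdiag k) hk hμ1

end Matrix

section modifiedPerron

variable {N : ℕ} (G : SimpleGraph (Fin N)) [DecidableRel G.Adj] (w : Fin N → ℝ) (ε : ℝ)

theorem modifiedPerron_apply_self (i : Fin N) :
    modifiedPerron N G w ε i i = 1 - ε * ∑ k ∈ G.neighborFinset i, w k := if_pos rfl

theorem modifiedPerron_apply_of_ne {i j : Fin N} (hij : i ≠ j) :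
    modifiedPerron N G w ε i j = if G.Adj i j then ε * w j else 0 := if_neg hij

theorem sum_modifiedPerron_row (i : Fin N) : ∑ j, modifiedPerron N G w ε i j = 1 := by
  rw [← add_sum_erase _ _ (mem_univ i), modifiedPerron_apply_self,
    sum_congr rfl fun j hj => modifiedPerron_apply_of_ne G w ε (ne_of_mem_erase hj).symm,
    sum_erase (f := fun j => if G.Adj i j then ε * w j else 0) _ (if_neg G.irrefl), ← sum_filter, ← mul_sum,
    ← SimpleGraph.neighborFinset_eq_filter, sub_add_cancel]

theorem modifiedPerron_apply_self_pos (hcond : ∀ i, ε * ∑ j ∈ G.neighborFinset i, w j < 1)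
    (i : Fin N) : 0 < modifiedPerron N G w ε i i := by
  rw [modifiedPerron_apply_self]
  linarith [hcond i]

theorem modifiedPerron_nonneg_of_ne (hw : ∀ i, 0 < w i) (hε : 0 < ε) {i j : Fin N}
    (hij : i ≠ j) : 0 ≤ modifiedPerron N G w ε i j := by
  rw [modifiedPerron_apply_of_ne G w ε hij]
  split_ifs
  exacts [mul_nonneg hε.le (hw j).le, le_rfl]

end modifiedPerron

theorem modifiedPerron_unique_max_modulus_eigenvalue_general (N : ℕ) (hN : 1 ≤ N)
    (G : SimpleGraph (Fin N)) [DecidableRel G.Adj]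
    (w : Fin N → ℝ) (hw : ∀ i, 0 < w i) (ε : ℝ) (hε : 0 < ε)
    (hcond : ∀ i, ε * ∑ j ∈ G.neighborFinset i, w j < 1) :
    (1 : ℂ) ∈ spectrum ℂ ((modifiedPerron N G w ε).map Complex.ofReal) ∧
      ∀ μ : ℂ, μ ∈ spectrum ℂ ((modifiedPerron N G w ε).map Complex.ofReal) →
        μ ≠ 1 → ‖μ‖ < 1 := by
  have : Nonempty (Fin N) := ⟨⟨0, hN⟩⟩
  refine ⟨Matrix.one_mem_spectrum_of_sum_row_eq_one fun i => ?_, fun μ hμ hμ1 =>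
    Matrix.norm_lt_one_of_mem_spectrum_map_ofReal (modifiedPerron_apply_self_pos G w ε hcond)
      (fun _ _ => modifiedPerron_nonneg_of_ne G w ε hw hε) (sum_modifiedPerron_row G w ε) hμ hμ1⟩
  simp only [Matrix.map_apply, ← Complex.ofReal_sum, sum_modifiedPerron_row, Complex.ofReal_one]

/-- **Unique eigenvalue of maximum modulus for the modified Perron matrix.**
If the graph is connected, the weights are positive and `0 < ε` with
`ε ∑_{j ∈ N_i} w j < 1` for every node `i`, then `1` is an eigenvalue of `Ŵ` and every
other eigenvalue `μ ∈ ℂ` of the complexification of `Ŵ` satisfies `‖μ‖ < 1`. -/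
theorem modifiedPerron_unique_max_modulus_eigenvalue (N : ℕ) (hN : 1 ≤ N)
    (G : SimpleGraph (Fin N)) [DecidableRel G.Adj] (hG : G.Connected)
    (w : Fin N → ℝ) (hw : ∀ i, 0 < w i) (ε : ℝ) (hε : 0 < ε)
    (hcond : ∀ i, ε * ∑ j ∈ G.neighborFinset i, w j < 1) :
    (1 : ℂ) ∈ spectrum ℂ ((modifiedPerron N G w ε).map Complex.ofReal) ∧
      ∀ μ : ℂ, μ ∈ spectrum ℂ ((modifiedPerron N G w ε).map Complex.ofReal) →
        μ ≠ 1 → ‖μ‖ < 1 :=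
  modifiedPerron_unique_max_modulus_eigenvalue_general N hN G w hw ε hε hcond
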